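/- arXiv:0804.3088 — 6 statements merged into one kernel-verified Lean document; each statement's English description precedes it below -/
import Mathlib

section
/- Let R_⋆ > 0, M > 0, and λ ≥ √(M/R_⋆). Suppose B is a closed disc of radius λ²R with R ≥ R_⋆ whose closest point to the origin is at distance u ∈ [0, M], and T is the tangent line to B at that closest point, with H (resp. H') the closed half-plane bounded by T (resp. by the coupled line D at distance ρ from the origin with the same polar angle, where u = λ²R(√(1+2ρ/(λ²R)) − 1)) not containing the origin. Then the Hausdorff distance, restricted to B(0,M), between the complement of B and the complement of H is at most M'²/(λ²R_⋆), where M' = M + M²/(λ²R_⋆). -/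
open Real MeasureTheory
open scoped RealInnerProductSpace

noncomputable section

/-- The `M`-restricted Hausdorff distance between `F` and `G`:
`inf {α > 0 : (F ⊕ B(0,α)) ∩ B(0,M) ⊇ G ∩ B(0,M)` and `(G ⊕ B(0,α)) ∩ B(0,M) ⊇ F ∩ B(0,M)}`. -/
def dHM (M : ℝ) (F G : Set (EuclideanSpace ℝ (Fin 2))) : ℝ :=
  sInf {α : ℝ | 0 < α ∧
    G ∩ Metric.closedBall 0 M ⊆ Metric.cthickening α F ∩ Metric.closedBall 0 M ∧
    F ∩ Metric.closedBall 0 M ⊆ Metric.cthickening α G ∩ Metric.closedBall 0 M}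

private lemma stmt3_aux (r u t X M α : ℝ) (hr0 : 0 < r) (hu0 : 0 ≤ u)
    (hXM : X ≤ M) (hX0 : 0 ≤ X) (hα2 : M ^ 2 / r ≤ α)
    (hsq : r ^ 2 < X ^ 2 - 2 * ((u + r) * t) + (u + r) ^ 2) (h : u < t) : t < u + α := by
  have hM2 : X ^ 2 ≤ M ^ 2 := by nlinarith
  have h1 : 2 * (u + r) * (t - u) < M ^ 2 := by nlinarith
  have h2 : r * (t - u) < M ^ 2 := by nlinarith
  have h3 : t - u < M ^ 2 / r := by rw [lt_div_iff₀ hr0]; nlinarith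
  linarith

/-- with `B` the coupled Boolean disc of radius `λ²R` at distance
`u = λ²R(√(1+2ρ/(λ²R)) − 1) ∈ [0,M]` from the origin and `H` the closed half-plane bounded
by the tangent line to `B` at its closest point to the origin, not containing the origin,
the `M`-restricted Hausdorff distance between `ᶜB` and `ᶜH` is at most `M'²/(λ²R⋆)`,
where `M' = M + M²/(λ²R⋆)`. -/
theorem stmt3 (Rstar M lam R ρ : ℝ) (hRstar : 0 < Rstar) (hM : 0 < M)
    (hlam : Real.sqrt (M / Rstar) ≤ lam) (hR : Rstar ≤ R) (hρ : 0 ≤ ρ)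
    (n : EuclideanSpace ℝ (Fin 2)) (hn : ‖n‖ = 1)
    (u : ℝ) (hu : u = lam ^ 2 * R * (Real.sqrt (1 + 2 * ρ / (lam ^ 2 * R)) - 1))
    (huM : u ≤ M)
    (B : Set (EuclideanSpace ℝ (Fin 2)))
    (hB : B = Metric.closedBall ((lam ^ 2 * R * Real.sqrt (1 + 2 * ρ / (lam ^ 2 * R))) • n)
      (lam ^ 2 * R))
    (H : Set (EuclideanSpace ℝ (Fin 2))) (hH : H = {x | u ≤ ⟪x, n⟫}) :
    dHM M Bᶜ Hᶜ ≤ (M + M ^ 2 / (lam ^ 2 * Rstar)) ^ 2 / (lam ^ 2 * Rstar) := by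
  have hl2 : M / Rstar ≤ lam ^ 2 := by
    nlinarith [Real.sq_sqrt (div_nonneg hM.le hRstar.le), Real.sqrt_nonneg (M / Rstar)]
  have hL : M ≤ lam ^ 2 * Rstar := by
    rw [div_le_iff₀ hRstar] at hl2; linarith
  have hL0 : (0:ℝ) < lam ^ 2 * Rstar := lt_of_lt_of_le hM hL
  set L : ℝ := lam ^ 2 * Rstar with hLdef
  set r : ℝ := lam ^ 2 * R with hrdef
  have hLr : L ≤ r := by
    have h2 : 0 < lam ^ 2 := lt_of_lt_of_le (div_pos hM hRstar) hl2
    have := mul_le_mul_of_nonneg_left hR h2.le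
    simpa [hLdef, hrdef] using this
  have hr0 : (0:ℝ) < r := lt_of_lt_of_le hL0 hLr
  have hrM : M ≤ r := hL.trans hLr
  have hu0 : 0 ≤ u := by
    have h1 : (1:ℝ) ≤ 1 + 2 * ρ / r := by
      have : 0 ≤ 2 * ρ / r := by positivity
      linarith
    have h2 : (1:ℝ) ≤ Real.sqrt (1 + 2 * ρ / r) := Real.one_le_sqrt.mpr h1
    rw [hu]
    have : 0 ≤ Real.sqrt (1 + 2 * ρ / (lam ^ 2 * R)) - 1 := by
      rw [← hrdef]; linarith
    positivity
  set α : ℝ := (M + M ^ 2 / L) ^ 2 / L with hαdef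
  have hα0 : 0 < α := by positivity
  have hα2 : M ^ 2 / r ≤ α := by
    have step1 : M ^ 2 / r ≤ M ^ 2 / L := by
      apply div_le_div_of_nonneg_left (by positivity) hL0 hLr
    have step2 : M ^ 2 / L ≤ (M + M ^ 2 / L) ^ 2 / L := by
      refine (div_le_div_iff_of_pos_right hL0).mpr ?_
      nlinarith [div_nonneg (sq_nonneg M) hL0.le, hM]
    exact step1.trans step2
  -- the center of B is (u + r) • n
  have hs : lam ^ 2 * R * Real.sqrt (1 + 2 * ρ / (lam ^ 2 * R)) = u + r := by
    rw [hu, ← hrdef]; ring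
  have hnn : ⟪n, n⟫ = 1 := by
    rw [real_inner_self_eq_norm_sq, hn]; norm_num
  -- B ⊆ H
  have hBH : B ⊆ H := by
    intro y hy
    rw [hB, hs, Metric.mem_closedBall, dist_eq_norm] at hy
    rw [hH]
    have h1 : ⟪(u + r) • n - y, n⟫ ≤ ‖(u + r) • n - y‖ * ‖n‖ := real_inner_le_norm _ _
    rw [hn, mul_one, inner_sub_left, real_inner_smul_left, hnn, mul_one] at h1
    have h2 : ‖(u + r) • n - y‖ = ‖y - (u + r) • n‖ := norm_sub_rev _ _
    simp only [Set.mem_setOf_eq]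
    linarith [h2 ▸ h1]
  apply csInf_le
  · exact ⟨0, fun a ha => ha.1.le⟩
  refine ⟨hα0, ?_, ?_⟩
  · rintro x ⟨hx1, hx2⟩
    exact ⟨Metric.self_subset_cthickening _ (fun hxB => hx1 (hBH hxB)), hx2⟩
  · rintro x ⟨hxB, hxM⟩
    refine ⟨?_, hxM⟩
    set t : ℝ := ⟪x, n⟫ with htdef
    have hxnorm : ‖x‖ ≤ M := by simpa [dist_eq_norm] using hxM
    have hX0 : (0:ℝ) ≤ ‖x‖ := norm_nonneg x
    set X : ℝ := ‖x‖ with hXdef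
    -- key: t - u < α
    have hkey : t < u + α := by
      rcases le_or_gt t u with h | h
      · linarith
      · have hxB' : r < ‖x - (u + r) • n‖ := by
          rw [hB, hs] at hxB
          simp only [Set.mem_compl_iff, Metric.mem_closedBall, dist_eq_norm, not_le] at hxB
          exact hxB
        have hsq : r ^ 2 < ‖x - (u + r) • n‖ ^ 2 := by
          nlinarith [norm_nonneg (x - (u + r) • n)]
        rw [norm_sub_sq_real, real_inner_smul_right, norm_smul, hn] at hsq
        have habs : (‖(u + r)‖ * 1) ^ 2 = (u + r) ^ 2 := by
          rw [Real.norm_eq_abs]; rw [mul_one, sq_abs]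
        rw [habs] at hsq
        rw [← htdef, ← hXdef] at hsq
        exact stmt3_aux r u t X M α hr0 hu0 hxnorm hX0 hα2 hsq h
    have hy : x - α • n ∈ Hᶜ := by
      rw [hH]
      simp only [Set.mem_compl_iff, Set.mem_setOf_eq, not_le]
      rw [inner_sub_left, real_inner_smul_left, hnn, mul_one]
      linarith
    have hd : dist x (x - α • n) ≤ α := by
      rw [dist_eq_norm, sub_sub_cancel, norm_smul, hn, mul_one, Real.norm_eq_abs,
        abs_of_pos hα0]
    exact Metric.mem_cthickening_of_dist_le x (x - α • n) α Hᶜ hy hd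

end
end

section
/- Fix angles θ, t with |θ − t| < π/2, and L > 0, R > 0. For λ ≥ √(2L·tan²(θ−t)·cos(θ−t)/R) (so all square roots below are defined), let d̄_λ = λ²R·cos(θ−t)·√(1 + 2L·cos(θ−t)/(λ²R)) − λ²R·√(1 − sin²(θ−t)·(1 + 2L·cos(θ−t)/(λ²R))) − L. Then λ²·d̄_λ converges, as λ → ∞, to −(L²/2)·cos(2(θ−t))/(R·cos(θ−t)). -/
/-!
Write `c = cos (θ - t)`, `s = sin (θ - t)` and `M = λ²R`. Since `c² + s² = 1`, the second square root
equals `c √(1 + u₂)` with `u₂ = -2Ls²/(cM)`, while the first is `√(1 + u₁)` with `u₁ = 2Lc/M`.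
The exact expansion `√(1 + u) = 1 + u/2 - u²/(2(1 + √(1 + u))²)` makes the first-order terms cancel
against `L`, leaving `M d̄ = 2L² (s⁴/(c P₂) - c³/P₁)` with `P_i = (1 + √(1 + u_i))² → 4`. Hence
`M d̄ → L²(s⁴ - c⁴)/(2c) = -L²(c² - s²)/(2c)`, and `λ² d̄ = (M d̄)/R`.
-/

open Real Filter Topology

lemma sqrt_one_add_eq_one_add_half_sub {u : ℝ} (hu : -1 ≤ u) :
    √(1 + u) = 1 + u / 2 - u ^ 2 / (2 * (1 + √(1 + u)) ^ 2) := by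
  have ha : √(1 + u) ^ 2 = 1 + u := sq_sqrt (by linarith)
  have hpos : 0 < 1 + √(1 + u) := by positivity
  generalize √(1 + u) = a at ha hpos ⊢
  obtain rfl : u = a ^ 2 - 1 := by linarith
  field_simp
  ring

lemma Filter.Tendsto.one_add_sqrt_one_add_sq {α : Type*} {l : Filter α} {f : α → ℝ}
    (hf : Tendsto f l (𝓝 0)) : Tendsto (fun x => (1 + √(1 + f x)) ^ 2) l (𝓝 4) := by
  convert ((hf.const_add 1).sqrt.const_add 1).pow 2
  norm_num

/-- The approximate defect `d̄_λ` as a function of `M = λ²R`, where `c = cos (θ - t)` and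
`s = sin (θ - t)`. -/
noncomputable def approxDefect (c s L M : ℝ) : ℝ :=
  M * c * √(1 + 2 * L * c / M) - M * √(1 - s ^ 2 * (1 + 2 * L * c / M)) - L

section
variable {c s : ℝ} (L : ℝ)

lemma mul_approxDefect_eq (hc : 0 < c) (hsc : s ^ 2 + c ^ 2 = 1) {M : ℝ} (hM : M ≠ 0)
    (h₁ : -1 ≤ 2 * L * c / M) (h₂ : -1 ≤ -(2 * L * s ^ 2 / (c * M))) :
    M * approxDefect c s L M = 2 * L ^ 2 *
      (s ^ 4 / (c * (1 + √(1 + -(2 * L * s ^ 2 / (c * M)))) ^ 2)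
        - c ^ 3 / (1 + √(1 + 2 * L * c / M)) ^ 2) := by
  have hrad : 1 - s ^ 2 * (1 + 2 * L * c / M) = c ^ 2 * (1 + -(2 * L * s ^ 2 / (c * M))) := by
    field_simp
    linear_combination (-M) * hsc
  have e₁ := sqrt_one_add_eq_one_add_half_sub h₁
  have e₂ := sqrt_one_add_eq_one_add_half_sub h₂
  have hP₁ : 0 < (1 + √(1 + 2 * L * c / M)) ^ 2 := by positivity
  have hP₂ : 0 < (1 + √(1 + -(2 * L * s ^ 2 / (c * M)))) ^ 2 := by positivity
  generalize (1 + √(1 + 2 * L * c / M)) ^ 2 = P₁ at e₁ hP₁ ⊢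
  generalize (1 + √(1 + -(2 * L * s ^ 2 / (c * M)))) ^ 2 = P₂ at e₂ hP₂ ⊢
  rw [approxDefect, hrad, sqrt_mul (sq_nonneg c), sqrt_sq hc.le, e₁, e₂]
  field_simp
  linear_combination M * c * L * P₁ * P₂ * hsc

theorem tendsto_mul_approxDefect (hc : 0 < c) (hsc : s ^ 2 + c ^ 2 = 1) :
    Tendsto (fun M => M * approxDefect c s L M) atTop
      (𝓝 (-(L ^ 2 / 2) * (c ^ 2 - s ^ 2) / c)) := by
  have hu₁ : Tendsto (fun M : ℝ => 2 * L * c / M) atTop (𝓝 0) :=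
    tendsto_const_nhds.div_atTop tendsto_id
  have hu₂ : Tendsto (fun M : ℝ => -(2 * L * s ^ 2 / (c * M))) atTop (𝓝 0) := by
    simpa using (tendsto_const_nhds.div_atTop (tendsto_id.const_mul_atTop hc)).neg
  have hvalue : 2 * L ^ 2 * (s ^ 4 / (c * 4) - c ^ 3 / 4) = -(L ^ 2 / 2) * (c ^ 2 - s ^ 2) / c := by
    field_simp
    linear_combination 4 * L ^ 2 * (s ^ 2 - c ^ 2) * hsc
  rw [← hvalue]
  refine .congr' ?_ (((tendsto_const_nhds.div (hu₂.one_add_sqrt_one_add_sq.const_mul c)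
    (by positivity)).sub (tendsto_const_nhds.div hu₁.one_add_sqrt_one_add_sq four_ne_zero)).const_mul
    (2 * L ^ 2))
  filter_upwards [eventually_ne_atTop 0, hu₁.eventually_const_le (by norm_num : (-1 : ℝ) < 0),
    hu₂.eventually_const_le (by norm_num : (-1 : ℝ) < 0)] with M hM h₁ h₂
  exact (mul_approxDefect_eq L hc hsc hM h₁ h₂).symm

end

theorem stmt4_general (θ t L R : ℝ) (hθt : |θ - t| < π / 2) (hR : 0 < R) :
    Tendsto (fun lam : ℝ => lam ^ 2 *
        (lam ^ 2 * R * Real.cos (θ - t) *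
            Real.sqrt (1 + 2 * L * Real.cos (θ - t) / (lam ^ 2 * R))
          - lam ^ 2 * R *
            Real.sqrt (1 - Real.sin (θ - t) ^ 2 *
              (1 + 2 * L * Real.cos (θ - t) / (lam ^ 2 * R)))
          - L))
      atTop
      (nhds (-(L ^ 2 / 2) * Real.cos (2 * (θ - t)) / (R * Real.cos (θ - t)))) := by
  have hc : 0 < cos (θ - t) := cos_pos_of_mem_Ioo (abs_lt.mp hθt)
  have hM : Tendsto (fun lam : ℝ => lam ^ 2 * R) atTop atTop :=
    (tendsto_pow_atTop two_ne_zero).atTop_mul_const hR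
  have key := ((tendsto_mul_approxDefect L hc (sin_sq_add_cos_sq _)).comp hM).const_mul R⁻¹
  rw [cos_two_mul', mul_comm R, ← div_div, div_eq_inv_mul _ R]
  refine key.congr fun lam => ?_
  simp only [Function.comp_apply, approxDefect]
  field_simp

/-- the rescaled approximate defect `λ²·d̄_λ` in a fixed direction converges,
as λ → ∞, to `−(L²/2)·cos(2(θ−t))/(R·cos(θ−t))`. -/
theorem stmt4 (θ t L R : ℝ) (hθt : |θ - t| < π / 2) (hL : 0 < L) (hR : 0 < R) :
    Tendsto (fun lam : ℝ => lam ^ 2 *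
        (lam ^ 2 * R * Real.cos (θ - t) *
            Real.sqrt (1 + 2 * L * Real.cos (θ - t) / (lam ^ 2 * R))
          - lam ^ 2 * R *
            Real.sqrt (1 - Real.sin (θ - t) ^ 2 *
              (1 + 2 * L * Real.cos (θ - t) / (lam ^ 2 * R)))
          - L))
      atTop
      (nhds (-(L ^ 2 / 2) * Real.cos (2 * (θ - t)) / (R * Real.cos (θ - t)))) :=
  stmt4_general θ t L R hθt hR
end

section
/- More precisely, under the setup of the approximate defect d̄_λ with |θ − t| < π/2, L > 0, R > 0, there exist constants C and λ₀ (depending on L, θ−t, R) such that for all λ ≥ λ₀, |λ²·d̄_λ + (L²/2)·cos(2(θ−t))/(R·cos(θ−t))| ≤ C/λ². -/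
open Real

set_option maxHeartbeats 1000000

private lemma aux_a1 (a ε : ℝ) (hε : 0 ≤ ε) (ha2 : a ^ 2 = 1 + ε) (ha0 : 0 ≤ a) :
    1 ≤ a := by nlinarith

private lemma aux_a2 (a ε : ℝ) (hε : ε ≤ 1 / 2) (ha2 : a ^ 2 = 1 + ε) (ha0 : 0 ≤ a) :
    a ≤ 2 := by nlinarith

private lemma aux_b1 (b c ε : ℝ) (hc : 0 < c) (hc1 : c ≤ 1) (hε : 0 ≤ ε)
    (hb2 : b ^ 2 = c ^ 2 - (1 - c ^ 2) * ε) (hb0 : 0 ≤ b) : b ≤ c := by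
  nlinarith [mul_nonneg (by nlinarith : (0:ℝ) ≤ 1 - c ^ 2) hε]

private lemma aux_b2 (b c ε : ℝ) (hc : 0 < c) (hεc : ε ≤ c ^ 2 / 2) (hε : 0 ≤ ε)
    (hb2 : b ^ 2 = c ^ 2 - (1 - c ^ 2) * ε) (hb0 : 0 ≤ b) : c / 2 ≤ b := by
  nlinarith [mul_nonneg (sq_nonneg c) hε]

private lemma aux_u (a ε : ℝ) (ha2 : a ^ 2 = 1 + ε) (ha1 : 1 ≤ a) :
    2 * (a - 1) ≤ ε := by nlinarith [sq_nonneg (a - 1)]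

private lemma aux_v (b c ε : ℝ) (hc : 0 < c) (hε : 0 ≤ ε)
    (hb2 : b ^ 2 = c ^ 2 - (1 - c ^ 2) * ε) (hb0 : 0 ≤ b) (hbc : b ≤ c) :
    c * (c - b) ≤ ε := by
  nlinarith [mul_nonneg hb0 (by linarith : (0:ℝ) ≤ c - b),
    mul_nonneg (mul_pos hc hc).le hε]

private lemma aux_A (a b c : ℝ) (hc : 0 < c) (hc1 : c ≤ 1) (ha1 : 1 ≤ a) (ha4 : a ≤ 2)
    (hbc : b ≤ c) (hbl : c / 2 ≤ b) :
    |12 * c ^ 4 - 4 * c ^ 2 + (2 * c ^ 2 - 1) *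
      (2 * c ^ 2 * (a - 1) - 6 * c * (c - b) - c * (a - 1) * (c - b))| ≤ 22 := by
  have hu0 : 0 ≤ a - 1 := by linarith
  have hu1 : a - 1 ≤ 1 := by linarith
  have hv0 : 0 ≤ c - b := by linarith
  have hv1 : c - b ≤ 1 / 2 := by linarith
  have m0 : |12 * c ^ 4 - 4 * c ^ 2| ≤ 12 := by
    rw [abs_le]
    constructor
    · nlinarith [sq_nonneg (c ^ 2)]
    · nlinarith [mul_nonneg (by nlinarith : (0:ℝ) ≤ 1 - c ^ 2) (sq_nonneg c),
        sq_nonneg c]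
  have m1 : |2 * c ^ 2 - 1| ≤ 1 := by
    rw [abs_le]; constructor <;> nlinarith [sq_nonneg c]
  have m2 : |2 * c ^ 2 * (a - 1) - 6 * c * (c - b) - c * (a - 1) * (c - b)| ≤ 6 := by
    have p1 : 0 ≤ c * (c - b) := mul_nonneg hc.le hv0
    have p2 : c * (c - b) ≤ 1 / 2 := by nlinarith [mul_nonneg (by linarith : (0:ℝ) ≤ 1 - c) hv0]
    have p3 : 0 ≤ c ^ 2 * (a - 1) := mul_nonneg (sq_nonneg c) hu0
    have p4 : c ^ 2 * (a - 1) ≤ 1 := by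
      nlinarith [mul_nonneg (by nlinarith : (0:ℝ) ≤ 1 - c ^ 2) hu0,
        mul_nonneg (sq_nonneg c) (by linarith : (0:ℝ) ≤ 1 - (a - 1))]
    have p5 : 0 ≤ c * (a - 1) * (c - b) := mul_nonneg (mul_nonneg hc.le hu0) hv0
    have p6 : c * (a - 1) * (c - b) ≤ 1 / 2 := by
      nlinarith [mul_nonneg (by nlinarith [mul_nonneg (by linarith : (0:ℝ) ≤ 1 - c) hu0] :
        (0:ℝ) ≤ 1 - c * (a - 1)) hv0]
    rw [abs_le]; constructor <;> nlinarith
  calc |12 * c ^ 4 - 4 * c ^ 2 + (2 * c ^ 2 - 1) *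
      (2 * c ^ 2 * (a - 1) - 6 * c * (c - b) - c * (a - 1) * (c - b))|
      ≤ |12 * c ^ 4 - 4 * c ^ 2| + |(2 * c ^ 2 - 1) *
        (2 * c ^ 2 * (a - 1) - 6 * c * (c - b) - c * (a - 1) * (c - b))| := abs_add_le _ _
    _ ≤ 12 + 1 * 6 := by
        rw [abs_mul]
        exact add_le_add m0 (mul_le_mul m1 m2 (abs_nonneg _) (by norm_num))
    _ ≤ 22 := by norm_num

private lemma aux_B (a b c : ℝ) (hc : 0 < c) (hc1 : c ≤ 1) (ha1 : 1 ≤ a) (ha4 : a ≤ 2)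
    (hbc : b ≤ c) (hbl : c / 2 ≤ b) :
    |8 * c - 12 * c ^ 3 + (2 * c ^ 2 - 1) * (2 + (a - 1)) * (c - b)| ≤ 22 := by
  have hu0 : 0 ≤ a - 1 := by linarith
  have hu1 : a - 1 ≤ 1 := by linarith
  have hv0 : 0 ≤ c - b := by linarith
  have hv1 : c - b ≤ 1 / 2 := by linarith
  have m0 : |8 * c - 12 * c ^ 3| ≤ 20 := by
    rw [abs_le]
    constructor
    · nlinarith [sq_nonneg c, sq_nonneg (c - 1), sq_nonneg (c + 1), mul_nonneg hc.le (sq_nonneg c)]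
    · nlinarith [mul_nonneg hc.le (sq_nonneg c)]
  have m1 : |2 * c ^ 2 - 1| ≤ 1 := by
    rw [abs_le]; constructor <;> nlinarith [sq_nonneg c]
  have m2 : |(2 + (a - 1)) * (c - b)| ≤ 2 := by
    rw [abs_le]
    constructor
    · nlinarith [mul_nonneg hu0 hv0]
    · nlinarith [mul_nonneg hu0 hv0, mul_nonneg hu0 (by linarith : (0:ℝ) ≤ 1 / 2 - (c - b))]
  calc |8 * c - 12 * c ^ 3 + (2 * c ^ 2 - 1) * (2 + (a - 1)) * (c - b)|
      ≤ |8 * c - 12 * c ^ 3| + |(2 * c ^ 2 - 1) * (2 + (a - 1)) * (c - b)| := abs_add_le _ _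
    _ ≤ 20 + 1 * 2 := by
        rw [mul_assoc, abs_mul]
        exact add_le_add m0 (mul_le_mul m1 m2 (abs_nonneg _) (by norm_num))
    _ ≤ 22 := by norm_num

private lemma aux_P (a b c ε A B : ℝ) (hc : 0 < c) (hc1 : c ≤ 1) (ha1 : 1 ≤ a)
    (hbc : b ≤ c) (hu : 2 * (a - 1) ≤ ε) (hv : c * (c - b) ≤ ε)
    (hA0 : 0 ≤ A) (hA : A ≤ 22) (hB0 : 0 ≤ B) (hB : B ≤ 22) :
    (a - 1) * A + (c - b) * B ≤ 33 * ε / c := by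
  rw [le_div_iff₀ hc]
  nlinarith [mul_nonneg (sub_nonneg.2 ha1) (by linarith : (0:ℝ) ≤ 22 - A),
    mul_nonneg (mul_nonneg hc.le (by linarith : (0:ℝ) ≤ c - b)) (by linarith : (0:ℝ) ≤ 22 - B),
    mul_nonneg (mul_nonneg (sub_nonneg.2 ha1) hA0) (by linarith : (0:ℝ) ≤ 1 - c),
    mul_nonneg (sub_nonneg.2 ha1) hA0,
    mul_nonneg (by linarith : (0:ℝ) ≤ c - b) hB0]

lemma stmt5_key (c L R T a b ε : ℝ) (hc : 0 < c) (hc1 : c ≤ 1) (hL : 0 < L) (hR : 0 < R)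
    (hT : 0 < T) (hε : 0 ≤ ε) (hεc : ε ≤ c ^ 2 / 2) (hεdef : T * R * ε = 2 * (L * c))
    (ha2 : a ^ 2 = 1 + ε) (hb2 : b ^ 2 = c ^ 2 - (1 - c ^ 2) * ε)
    (ha0 : 0 ≤ a) (hb0 : 0 ≤ b) :
    |T * (T * R * c * a - T * R * b - L) + L ^ 2 / 2 * (2 * c ^ 2 - 1) / (R * c)|
      ≤ 22 * L ^ 3 / (3 * c ^ 3 * R ^ 2) / T := by
  have ha1 : 1 ≤ a := aux_a1 a ε hε ha2 ha0
  have ha4 : a ≤ 2 := aux_a2 a ε (by nlinarith) ha2 ha0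
  have hbc : b ≤ c := aux_b1 b c ε hc hc1 hε hb2 hb0
  have hbl : c / 2 ≤ b := aux_b2 b c ε hc hεc hε hb2 hb0
  have hRc : (0:ℝ) < R * c := mul_pos hR hc
  have hK : L ^ 2 / 2 * (2 * c ^ 2 - 1) / (R * c) * (R * c) = L ^ 2 / 2 * (2 * c ^ 2 - 1) :=
    div_mul_cancel₀ _ hRc.ne'
  have h0 : c ^ 2 * a ^ 2 - b ^ 2 = ε := by linear_combination c ^ 2 * ha2 - hb2
  have h1 : T ^ 2 * R * ((c * a - b) * (c * a + b)) = 2 * (L * c) * T := by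
    linear_combination T ^ 2 * R * h0 + T * hεdef
  have h0b : c ^ 2 - b ^ 2 = (1 - c ^ 2) * ε := by linear_combination -hb2
  have h2 : (2 * c - c * a - b) * ((c + b) * (1 + a))
      = ε * ((1 - c ^ 2) * (1 + a) - c ^ 2 - c * b) := by
    linear_combination (-(c * (c + b))) * ha2 + (1 + a) * h0b
  have hXD : (T * (T * R * c * a - T * R * b - L) + L ^ 2 / 2 * (2 * c ^ 2 - 1) / (R * c))
        * (4 * c ^ 2 * R * ((c * a + b) * ((c + b) * (1 + a))))
      = 2 * L ^ 2 * c * (4 * c ^ 2 * ((1 - c ^ 2) * (1 + a) - c ^ 2 - c * b)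
          + (2 * c ^ 2 - 1) * ((c * a + b) * ((c + b) * (1 + a)))) := by
    linear_combination (4 * c ^ 2 * R * ((c + b) * (1 + a))) * h1
      + (4 * c ^ 2 * R * T * L) * h2
      + (4 * c ^ 2 * L * ((1 - c ^ 2) * (1 + a) - c ^ 2 - c * b)) * hεdef
      + (4 * c * ((c * a + b) * ((c + b) * (1 + a)))) * hK
  have e1 : 3 * c / 2 ≤ c * a + b := by nlinarith
  have e2 : 3 * c / 2 ≤ c + b := by linarith
  have e3 : (2:ℝ) ≤ 1 + a := by linarith
  have e4 : (3 * c / 2) * 2 ≤ (c + b) * (1 + a) :=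
    mul_le_mul e2 e3 (by norm_num) (by linarith)
  have e5 : (3 * c / 2) * ((3 * c / 2) * 2) ≤ (c * a + b) * ((c + b) * (1 + a)) :=
    mul_le_mul e1 e4 (by nlinarith) (by linarith)
  have hDlb : 9 * c ^ 2 / 2 ≤ (c * a + b) * ((c + b) * (1 + a)) := by nlinarith
  have hDpos : (0:ℝ) < (c * a + b) * ((c + b) * (1 + a)) := by nlinarith
  have hD4 : (0:ℝ) < 4 * c ^ 2 * R * ((c * a + b) * ((c + b) * (1 + a))) := by positivity
  have hX : T * (T * R * c * a - T * R * b - L) + L ^ 2 / 2 * (2 * c ^ 2 - 1) / (R * c)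
      = 2 * L ^ 2 * c * (4 * c ^ 2 * ((1 - c ^ 2) * (1 + a) - c ^ 2 - c * b)
          + (2 * c ^ 2 - 1) * ((c * a + b) * ((c + b) * (1 + a))))
        / (4 * c ^ 2 * R * ((c * a + b) * ((c + b) * (1 + a)))) := by
    rw [eq_div_iff hD4.ne']; exact hXD
  have hu : 2 * (a - 1) ≤ ε := aux_u a ε ha2 ha1
  have hv : c * (c - b) ≤ ε := aux_v b c ε hc hε hb2 hb0 hbc
  have hA := aux_A a b c hc hc1 ha1 ha4 hbc hbl
  have hB := aux_B a b c hc hc1 ha1 ha4 hbc hbl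
  have hPd : 4 * c ^ 2 * ((1 - c ^ 2) * (1 + a) - c ^ 2 - c * b)
        + (2 * c ^ 2 - 1) * ((c * a + b) * ((c + b) * (1 + a)))
      = (a - 1) * (12 * c ^ 4 - 4 * c ^ 2 + (2 * c ^ 2 - 1) *
          (2 * c ^ 2 * (a - 1) - 6 * c * (c - b) - c * (a - 1) * (c - b)))
        + (c - b) * (8 * c - 12 * c ^ 3 + (2 * c ^ 2 - 1) * (2 + (a - 1)) * (c - b)) := by
    ring
  have hP : |4 * c ^ 2 * ((1 - c ^ 2) * (1 + a) - c ^ 2 - c * b)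
        + (2 * c ^ 2 - 1) * ((c * a + b) * ((c + b) * (1 + a)))| ≤ 33 * ε / c := by
    rw [hPd]
    refine (abs_add_le _ _).trans ?_
    rw [abs_mul, abs_mul, abs_of_nonneg (by linarith : (0:ℝ) ≤ a - 1),
      abs_of_nonneg (by linarith : (0:ℝ) ≤ c - b)]
    exact aux_P a b c ε _ _ hc hc1 ha1 hbc hu hv (abs_nonneg _) hA (abs_nonneg _) hB
  have habs : |2 * L ^ 2 * c * (4 * c ^ 2 * ((1 - c ^ 2) * (1 + a) - c ^ 2 - c * b)
        + (2 * c ^ 2 - 1) * ((c * a + b) * ((c + b) * (1 + a))))|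
      = 2 * L ^ 2 * c * |4 * c ^ 2 * ((1 - c ^ 2) * (1 + a) - c ^ 2 - c * b)
        + (2 * c ^ 2 - 1) * ((c * a + b) * ((c + b) * (1 + a)))| := by
    rw [abs_mul, abs_of_pos (by positivity : (0:ℝ) < 2 * L ^ 2 * c)]
  rw [hX, abs_div, abs_of_pos hD4, habs]
  have step : 2 * L ^ 2 * c * |4 * c ^ 2 * ((1 - c ^ 2) * (1 + a) - c ^ 2 - c * b)
        + (2 * c ^ 2 - 1) * ((c * a + b) * ((c + b) * (1 + a)))|
        / (4 * c ^ 2 * R * ((c * a + b) * ((c + b) * (1 + a))))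
      ≤ 2 * L ^ 2 * c * (33 * ε / c) / (4 * c ^ 2 * R * (9 * c ^ 2 / 2)) := by
    apply div_le_div₀ (by positivity)
    · exact mul_le_mul_of_nonneg_left hP (by positivity)
    · positivity
    · have h6 : 4 * c ^ 2 * R * (9 * c ^ 2 / 2) ≤ 4 * c ^ 2 * R *
          ((c * a + b) * ((c + b) * (1 + a))) :=
        mul_le_mul_of_nonneg_left hDlb (by positivity)
      linarith
  refine step.trans (le_of_eq ?_)
  have hεval : ε = 2 * (L * c) / (T * R) := by
    rw [eq_div_iff (by positivity : T * R ≠ 0)]; linear_combination hεdef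
  rw [hεval]
  field_simp
  ring


/-- second-order expansion of the approximate defect with rate O(λ⁻⁴):
there are constants `C` and `λ₀` (depending on `L`, `θ−t`, `R`) such that for all `λ ≥ λ₀`,
`|λ²·d̄_λ + (L²/2)·cos(2(θ−t))/(R·cos(θ−t))| ≤ C/λ²`, where
`d̄_λ = λ²R·cos(θ−t)·√(1 + 2Υ/(λ²R)) − λ²R·√(1 − sin²(θ−t)·(1 + 2Υ/(λ²R))) − Υ/cos(θ−t)`
and `Υ = L·cos(θ−t)`. -/
theorem stmt5 (θ t L R : ℝ) (hθt : |θ - t| < π / 2) (hL : 0 < L) (hR : 0 < R) :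
    ∃ C lam₀ : ℝ, ∀ lam : ℝ, lam₀ ≤ lam →
      |lam ^ 2 *
          (lam ^ 2 * R * Real.cos (θ - t) *
              Real.sqrt (1 + 2 * (L * Real.cos (θ - t)) / (lam ^ 2 * R))
            - lam ^ 2 * R *
              Real.sqrt (1 - Real.sin (θ - t) ^ 2 *
                (1 + 2 * (L * Real.cos (θ - t)) / (lam ^ 2 * R)))
            - L * Real.cos (θ - t) / Real.cos (θ - t))
        + (L ^ 2 / 2) * Real.cos (2 * (θ - t)) / (R * Real.cos (θ - t))|
        ≤ C / lam ^ 2 := by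
  have hc : 0 < Real.cos (θ - t) :=
    Real.cos_pos_of_mem_Ioo ⟨(abs_lt.1 hθt).1, (abs_lt.1 hθt).2⟩
  have hc1 : Real.cos (θ - t) ≤ 1 := Real.cos_le_one _
  have pyth : Real.sin (θ - t) ^ 2 + Real.cos (θ - t) ^ 2 = 1 := Real.sin_sq_add_cos_sq _
  refine ⟨22 * L ^ 3 / (3 * Real.cos (θ - t) ^ 3 * R ^ 2),
    Real.sqrt (4 * L / (Real.cos (θ - t) * R)) + 1, fun lam hlam => ?_⟩
  have hs0 : 0 ≤ Real.sqrt (4 * L / (Real.cos (θ - t) * R)) := Real.sqrt_nonneg _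
  have hlam1 : 1 ≤ lam := by linarith
  have hlam0 : 0 < lam := by linarith
  have hT : 0 < lam ^ 2 := by positivity
  have hlamsq : 4 * L / (Real.cos (θ - t) * R) ≤ lam ^ 2 := by
    have h := Real.sq_sqrt (show (0:ℝ) ≤ 4 * L / (Real.cos (θ - t) * R) by positivity)
    nlinarith [mul_nonneg (by linarith : (0:ℝ) ≤ lam - Real.sqrt (4 * L / (Real.cos (θ - t) * R)))
      (by linarith : (0:ℝ) ≤ lam + Real.sqrt (4 * L / (Real.cos (θ - t) * R)))]
  rw [Real.cos_two_mul, mul_div_assoc L, div_self hc.ne', mul_one]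
  set c := Real.cos (θ - t) with hcdef
  set s := Real.sin (θ - t) with hsdef
  set ε := 2 * (L * c) / (lam ^ 2 * R) with hεd
  have hε0 : 0 ≤ ε := by positivity
  have hlr : 4 * L ≤ lam ^ 2 * (c * R) := by
    rw [div_le_iff₀ (by positivity)] at hlamsq; linarith
  have hεc : ε ≤ c ^ 2 / 2 := by
    rw [hεd, div_le_iff₀ (by positivity)]
    nlinarith [mul_le_mul_of_nonneg_left hlr (by positivity : (0:ℝ) ≤ c / 2)]
  have hεdef : lam ^ 2 * R * ε = 2 * (L * c) := by
    rw [hεd]; field_simp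
  have ha2 : Real.sqrt (1 + ε) ^ 2 = 1 + ε := Real.sq_sqrt (by positivity)
  have hbarg : 0 ≤ 1 - s ^ 2 * (1 + ε) := by
    nlinarith [mul_nonneg (sq_nonneg c) hε0, sq_nonneg s, sq_nonneg c]
  have hb2 : Real.sqrt (1 - s ^ 2 * (1 + ε)) ^ 2 = c ^ 2 - (1 - c ^ 2) * ε := by
    rw [Real.sq_sqrt hbarg]; linear_combination (-(1 + ε)) * pyth
  exact stmt5_key c L R (lam ^ 2) (Real.sqrt (1 + ε)) (Real.sqrt (1 - s ^ 2 * (1 + ε))) ε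
    hc hc1 hL hR hT hε0 hεc hεdef ha2 hb2 (Real.sqrt_nonneg _) (Real.sqrt_nonneg _)
end

section
/- Let 0 < r < s, R_⋆ > 0, and let θ ↦ Υ, Θ, R be constant on an interval I = [a,b) ⊂ [0,2π), with r ≤ Υ ≤ s, R ≥ R_⋆, and |Θ − t| < π/2 with cos(Θ − t) ≥ r/s for all t ∈ I (i.e. the ray Δ_t meets the edge at distance Υ/cos(Θ−t) ∈ [r,s] from the origin). Then for λ ≥ 2√(s³/(r²R_⋆)), the function t ↦ λ²·d̄_λ(t) := λ²[λ²R·cos(Θ−t)·√(1 + 2Υ/(λ²R)) − λ²R·√(1 − sin²(Θ−t)(1 + 2Υ/(λ²R))) − Υ/cos(Θ−t)] is well-defined and Lipschitz continuous on I with Lipschitz constant at most 13·s⁶/(r⁴·R_⋆). -/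
/-!
Write `u = Θ - t`, `A = λ²R`, `ε = 2ϒ/A`, `c = cos u`, `p = √(1 + ε)` and
`q = √(1 - sin² u · (1 + ε))`. The `u`-derivative of `d̄_λ` is `-sin u · (A p - A c p²/q + ϒ/c²)`,
and since `q² - c²p² = -ε = -2ϒ/A` the large factor `A` cancels:
`A p - A c p²/q = -2ϒp / (q (q + c p))`. What remains is
`-ϒ sin u · (q² + c p q - 2c²p) / (c² q (q + c p))`, whose numerator is `O(ε)` and whose
denominator is at least `κ⁴/2` for `κ = r/s`, as soon as `ε ≤ κ²/2`; the lower bound on `λ` is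
exactly what makes `ε ≤ κ²/2`. So `|d̄_λ'| ≤ 12ϒ²/(Aκ⁴)`, and after the factor `λ²` the mean
value theorem gives the Lipschitz constant `12ϒ²s⁴/(R r⁴) ≤ 13 s⁶/(r⁴R⋆)`.
-/

open Real

/-- `d̄_λ` at the angle `u = Θ - t`, with `A = λ²R`. -/
noncomputable def edgeDefect (A ϒ u : ℝ) : ℝ :=
  A * cos u * √(1 + 2 * ϒ / A) - A * √(1 - sin u ^ 2 * (1 + 2 * ϒ / A)) - ϒ / cos u

noncomputable def edgeDefectDeriv (A ϒ u : ℝ) : ℝ :=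
  -sin u * (A * √(1 + 2 * ϒ / A)
    - A * cos u * (1 + 2 * ϒ / A) / √(1 - sin u ^ 2 * (1 + 2 * ϒ / A)) + ϒ / cos u ^ 2)

theorem hasDerivAt_edgeDefect {A ϒ u : ℝ} (hc : cos u ≠ 0)
    (hq : 0 < 1 - sin u ^ 2 * (1 + 2 * ϒ / A)) :
    HasDerivAt (edgeDefect A ϒ) (edgeDefectDeriv A ϒ u) u := by
  have hrad : HasDerivAt (fun x => 1 - sin x ^ 2 * (1 + 2 * ϒ / A))
      (-(2 * sin u * cos u * (1 + 2 * ϒ / A))) u := by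
    simpa using (((hasDerivAt_sin u).fun_pow 2).mul_const (1 + 2 * ϒ / A)).const_sub 1
  have h := ((((hasDerivAt_cos u).const_mul A).mul_const (√(1 + 2 * ϒ / A))).sub
    ((hrad.sqrt hq.ne').const_mul A)).sub ((hasDerivAt_const u ϒ).div (hasDerivAt_cos u) hc)
  refine h.congr_deriv ?_
  have hq' : √(1 - sin u ^ 2 * (1 + 2 * ϒ / A)) ≠ 0 := (sqrt_pos.2 hq).ne'
  unfold edgeDefectDeriv
  field_simp
  ring

theorem sq_div_two_le_radicand {A ϒ κ u : ℝ} (hA : 0 < A) (hϒ : 0 ≤ ϒ) (hκ : 0 ≤ κ)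
    (hκc : κ ≤ cos u) (hϒA : 4 * ϒ ≤ κ ^ 2 * A) :
    κ ^ 2 / 2 ≤ 1 - sin u ^ 2 * (1 + 2 * ϒ / A) := by
  have hε : 2 * ϒ / A ≤ κ ^ 2 / 2 := by
    rw [div_le_iff₀ hA]; linarith
  have hε0 : 0 ≤ 2 * ϒ / A := by positivity
  have hS : sin u ^ 2 ≤ 1 := sin_sq_le_one u
  have hc : κ ^ 2 ≤ cos u ^ 2 := pow_le_pow_left₀ hκ hκc 2
  nlinarith [sin_sq_add_cos_sq u, mul_le_of_le_one_left hε0 hS]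

theorem edgeDefectDeriv_factor_eq {A ϒ ε c p q : ℝ} (hAε : A * ε = 2 * ϒ) (hp : p ^ 2 = 1 + ε)
    (hq : q ^ 2 = c ^ 2 * (1 + ε) - ε) (hc : c ≠ 0) (hq0 : q ≠ 0) (hqcp : q + c * p ≠ 0) :
    A * p - A * c * (1 + ε) / q + ϒ / c ^ 2
      = ϒ * (q ^ 2 + c * p * q - 2 * c ^ 2 * p) / (c ^ 2 * (q * (q + c * p))) := by
  have hden : c ^ 2 * (q * (q + c * p)) ≠ 0 := by positivity
  rw [eq_div_iff hden]
  field_simp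
  linear_combination c ^ 2 * p * A * hq - c ^ 2 * p * hAε + A * c ^ 3 * q * hp

theorem abs_edgeDefectDeriv_numerator_le {c p q : ℝ} (hp1 : 1 ≤ p) (hp2 : p ≤ 2) (hc0 : 0 ≤ c)
    (hc1 : c ≤ 1) (hq0 : 0 ≤ q) (hq : q ^ 2 = c ^ 2 * p ^ 2 - (p ^ 2 - 1)) :
    |q ^ 2 + c * p * q - 2 * c ^ 2 * p| ≤ 3 * (p ^ 2 - 1) := by
  have hsq : c ^ 2 - q ^ 2 = (1 - c ^ 2) * (p ^ 2 - 1) := by rw [hq]; ring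
  have hε : 0 ≤ p ^ 2 - 1 := by nlinarith
  have hqc : q ≤ c := by
    refine (pow_le_pow_iff_left₀ hq0 hc0 two_ne_zero).1 ?_
    have hc2 : c ^ 2 ≤ 1 := by nlinarith
    nlinarith [mul_nonneg (sub_nonneg.2 hc2) hε]
  have hcq : (c - q) * c ≤ p ^ 2 - 1 := by nlinarith
  have hN : q ^ 2 + c * p * q - 2 * c ^ 2 * p
      = -(p ^ 2 - 1) - p * ((c - q) * c) - c ^ 2 * p * (1 - p) := by rw [hq]; ring
  rw [hN, abs_le]
  constructor <;> nlinarith [mul_le_mul_of_nonneg_left hcq (by linarith : 0 ≤ p)]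

theorem abs_edgeDefectDeriv_le {A ϒ κ u : ℝ} (hA : 0 < A) (hϒ : 0 ≤ ϒ) (hκ : 0 < κ)
    (hκc : κ ≤ cos u) (hϒA : 4 * ϒ ≤ κ ^ 2 * A) :
    |edgeDefectDeriv A ϒ u| ≤ 12 * ϒ ^ 2 / (A * κ ^ 4) := by
  have hrad := sq_div_two_le_radicand hA hϒ hκ.le hκc hϒA
  unfold edgeDefectDeriv
  set ε := 2 * ϒ / A with hεdef
  set c := cos u
  set p := √(1 + ε)
  set q := √(1 - sin u ^ 2 * (1 + ε))
  have hc0 : 0 < c := hκ.trans_le hκc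
  have hc1 : c ≤ 1 := cos_le_one u
  have hAε : A * ε = 2 * ϒ := by rw [hεdef]; field_simp
  have hε0 : 0 ≤ ε := by positivity
  have hε : ε ≤ κ ^ 2 / 2 := by rw [hεdef, div_le_iff₀ hA]; linarith
  have hp : p ^ 2 = 1 + ε := sq_sqrt (by linarith)
  have hp1 : 1 ≤ p := one_le_sqrt.2 (by linarith)
  have hp2 : p ≤ 2 := by nlinarith
  have hrad0 : 0 < 1 - sin u ^ 2 * (1 + ε) := lt_of_lt_of_le (by positivity) hrad
  have hq0 : 0 < q := sqrt_pos.2 hrad0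
  have hq : q ^ 2 = c ^ 2 * (1 + ε) - ε := by
    rw [sq_sqrt hrad0.le]; linear_combination -(1 + ε) * sin_sq_add_cos_sq u
  have hqκ : κ / 2 ≤ q := by
    refine (pow_le_pow_iff_left₀ (by positivity) hq0.le two_ne_zero).1 ?_
    rw [sq_sqrt hrad0.le]; linarith
  have hden : κ ^ 4 / 2 ≤ c ^ 2 * (q * (q + c * p)) := by
    have hqcp : κ ≤ q + c * p := by nlinarith
    calc κ ^ 4 / 2 = κ ^ 2 * (κ / 2 * κ) := by ring
      _ ≤ c ^ 2 * (q * (q + c * p)) := by gcongr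
  have hN := abs_edgeDefectDeriv_numerator_le hp1 hp2 hc0.le hc1 hq0.le
    (by rw [hq, hp]; ring)
  rw [hp, add_sub_cancel_left] at hN
  have hden0 : 0 < c ^ 2 * (q * (q + c * p)) := by positivity
  rw [edgeDefectDeriv_factor_eq hAε hp hq hc0.ne' hq0.ne' (by positivity), abs_mul,
    abs_neg, abs_div, abs_mul, abs_of_nonneg hϒ, abs_of_pos hden0]
  calc |sin u| * (ϒ * |q ^ 2 + c * p * q - 2 * c ^ 2 * p| / (c ^ 2 * (q * (q + c * p))))
      ≤ 1 * (ϒ * (3 * ε) / (κ ^ 4 / 2)) := by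
        gcongr
        exact abs_sin_le_one u
    _ = 12 * ϒ ^ 2 / (A * κ ^ 4) := by
        rw [hεdef]; field_simp; ring

theorem lipschitzOnWith_const_mul_edgeDefect_sub {A ϒ κ Θ k : ℝ} {I : Set ℝ}
    (hI : Convex ℝ I) (hA : 0 < A) (hϒ : 0 ≤ ϒ) (hκ : 0 < κ) (hϒA : 4 * ϒ ≤ κ ^ 2 * A)
    (hcos : ∀ t ∈ I, κ ≤ cos (Θ - t)) :
    LipschitzOnWith (Real.toNNReal (|k| * (12 * ϒ ^ 2 / (A * κ ^ 4))))
      (fun t => k * edgeDefect A ϒ (Θ - t)) I := by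
  have hderiv : ∀ t ∈ I, HasDerivAt (fun t => k * edgeDefect A ϒ (Θ - t))
      (k * (edgeDefectDeriv A ϒ (Θ - t) * -1)) t := by
    intro t ht
    have hd := hasDerivAt_edgeDefect (hκ.trans_le (hcos t ht)).ne'
      (lt_of_lt_of_le (by positivity) (sq_div_two_le_radicand hA hϒ hκ.le (hcos t ht) hϒA))
    exact (hd.comp t ((hasDerivAt_id t).const_sub Θ)).const_mul k
  refine hI.lipschitzOnWith_of_nnnorm_hasDerivWithin_le
    (fun t ht => (hderiv t ht).hasDerivWithinAt) fun t ht => ?_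
  rw [← NNReal.coe_le_coe, coe_nnnorm, Real.coe_toNNReal _ (by positivity), norm_eq_abs,
    abs_mul, abs_mul, abs_neg, abs_one, mul_one]
  gcongr
  exact abs_edgeDefectDeriv_le hA hϒ hκ (hcos t ht) hϒA

theorem four_mul_le_sq_div_mul_of_two_sqrt_le {r s Rstar ϒ R lam : ℝ} (hr : 0 < r) (hs : 0 < s)
    (hRstar : 0 < Rstar) (hϒ : ϒ ≤ s) (hR : Rstar ≤ R)
    (hlam : 2 * √(s ^ 3 / (r ^ 2 * Rstar)) ≤ lam) :
    4 * ϒ ≤ (r / s) ^ 2 * (lam ^ 2 * R) := by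
  have hlam2 : 4 * (s ^ 3 / (r ^ 2 * Rstar)) ≤ lam ^ 2 := by
    have h := pow_le_pow_left₀ (by positivity) hlam 2
    rw [mul_pow, sq_sqrt (by positivity)] at h
    linarith
  have hA : 4 * s ^ 3 / r ^ 2 ≤ lam ^ 2 * R :=
    calc 4 * s ^ 3 / r ^ 2 = 4 * (s ^ 3 / (r ^ 2 * Rstar)) * Rstar := by field_simp
      _ ≤ lam ^ 2 * R := by gcongr
  rw [div_pow, div_mul_eq_mul_div, le_div_iff₀ (by positivity)]
  rw [div_le_iff₀ (by positivity)] at hA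
  nlinarith

theorem stmt12_general (r s Rstar ϒ Θ R a b lam : ℝ)
    (hr : 0 < r) (hRstar : 0 < Rstar)
    (hϒ₁ : r ≤ ϒ) (hϒ₂ : ϒ ≤ s) (hR : Rstar ≤ R)
    (hang : ∀ t ∈ Set.Ico a b, |Θ - t| < π / 2 ∧ r / s ≤ Real.cos (Θ - t))
    (hlam : 2 * Real.sqrt (s ^ 3 / (r ^ 2 * Rstar)) ≤ lam) :
    LipschitzOnWith (Real.toNNReal (13 * s ^ 6 / (r ^ 4 * Rstar)))
      (fun t : ℝ => lam ^ 2 *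
        (lam ^ 2 * R * Real.cos (Θ - t) * Real.sqrt (1 + 2 * ϒ / (lam ^ 2 * R))
          - lam ^ 2 * R *
            Real.sqrt (1 - Real.sin (Θ - t) ^ 2 * (1 + 2 * ϒ / (lam ^ 2 * R)))
          - ϒ / Real.cos (Θ - t)))
      (Set.Ico a b) := by
  have hs : 0 < s := by linarith
  have hϒA := four_mul_le_sq_div_mul_of_two_sqrt_le hr hs hRstar hϒ₂ hR hlam
  have hA : 0 < lam ^ 2 * R := pos_of_mul_pos_right (by linarith) (sq_nonneg _)
  refine (lipschitzOnWith_const_mul_edgeDefect_sub (convex_Ico a b) hA (by linarith)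
    (div_pos hr hs) hϒA fun t ht => (hang t ht).2).weaken (Real.toNNReal_le_toNNReal ?_)
  calc |lam ^ 2| * (12 * ϒ ^ 2 / (lam ^ 2 * R * (r / s) ^ 4))
      = 12 * ϒ ^ 2 * s ^ 4 / (r ^ 4 * R) := by
        have hlam0 : lam ≠ 0 := by rintro rfl; simp at hA
        rw [abs_of_nonneg (sq_nonneg lam)]
        field_simp
    _ ≤ 12 * s ^ 2 * s ^ 4 / (r ^ 4 * Rstar) := by gcongr; linarith
    _ ≤ 13 * s ^ 6 / (r ^ 4 * Rstar) := by
        rw [mul_assoc, ← pow_add]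
        gcongr
        norm_num

/-- on an interval of directions served by a single edge (at distance `Υ` from
the origin, normal angle `Θ`, mark `R`), the rescaled approximate defect
`t ↦ λ²·d̄_λ(t)` is Lipschitz with constant at most `13·s⁶/(r⁴·R⋆)` once
`λ ≥ 2√(s³/(r²R⋆))`. -/
theorem stmt12 (r s Rstar ϒ Θ R a b lam : ℝ)
    (hr : 0 < r) (hrs : r < s) (hRstar : 0 < Rstar)
    (hϒ₁ : r ≤ ϒ) (hϒ₂ : ϒ ≤ s) (hR : Rstar ≤ R)
    (hI : Set.Ico a b ⊆ Set.Ico 0 (2 * π))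
    (hang : ∀ t ∈ Set.Ico a b, |Θ - t| < π / 2 ∧ r / s ≤ Real.cos (Θ - t))
    (hlam : 2 * Real.sqrt (s ^ 3 / (r ^ 2 * Rstar)) ≤ lam) :
    LipschitzOnWith (Real.toNNReal (13 * s ^ 6 / (r ^ 4 * Rstar)))
      (fun t : ℝ => lam ^ 2 *
        (lam ^ 2 * R * Real.cos (Θ - t) * Real.sqrt (1 + 2 * ϒ / (lam ^ 2 * R))
          - lam ^ 2 * R *
            Real.sqrt (1 - Real.sin (Θ - t) ^ 2 * (1 + 2 * ϒ / (lam ^ 2 * R)))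
          - ϒ / Real.cos (Θ - t)))
      (Set.Ico a b) :=
  stmt12_general r s Rstar ϒ Θ R a b lam hr hRstar hϒ₁ hϒ₂ hR hang hlam
end

section
/- Under the same single-edge setup (r ≤ Υ ≤ s, Υ/cos(Θ−t) ≤ s, R ≥ R_⋆, |Θ−t| < π/2), there is an explicit constant C(r,s,R_⋆) such that for all λ ≥ 2√(s³/(r²R_⋆)) and all t in the interval, |λ²·d̄_λ(t) − X(t)| ≤ C(r,s,R_⋆)/λ², where X(t) = −(Υ²/(2R))·cos(2(Θ−t))/cos³(Θ−t). -/
open Real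

set_option maxHeartbeats 1600000 in
lemma sqrt_taylor13 {x : ℝ} (hx : |x| ≤ 1/2) :
    |Real.sqrt (1+x) - (1 + x/2 - x^2/8)| ≤ |x|^3 := by
  obtain ⟨hx1, hx2⟩ := abs_le.mp hx
  have h1 : (0:ℝ) ≤ 1 + x := by linarith
  have hy2 : Real.sqrt (1+x) ^ 2 = 1 + x := Real.sq_sqrt h1
  have hy0 : 0 ≤ Real.sqrt (1+x) := Real.sqrt_nonneg _
  have hp : (23:ℝ)/32 ≤ 1 + x/2 - x^2/8 := by nlinarith [sq_nonneg x]
  have h40 : (0:ℝ) ≤ x^4 := by positivity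
  have h60 : (0:ℝ) ≤ x^6 := by positivity
  rw [abs_sub_le_iff]
  rcases le_or_gt 0 x with hs | hs
  · rw [abs_of_nonneg hs]
    have hc : 0 ≤ x^3 := by positivity
    have hp1 : (1:ℝ) ≤ 1 + x/2 - x^2/8 := by nlinarith
    have hpm : x^3 * 1 ≤ x^3 * (1 + x/2 - x^2/8) :=
      mul_le_mul_of_nonneg_left hp1 hc
    have h4 : x^4 ≤ x^3/2 := by nlinarith [mul_nonneg hc (by linarith : (0:ℝ) ≤ 1/2 - x)]
    have h6 : x^6 ≤ x^3/8 := by nlinarith [mul_nonneg hc (by nlinarith : (0:ℝ) ≤ 1/8 - x^3)]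
    constructor
    · have hB0 : 0 ≤ 1 + x/2 - x^2/8 + x^3 := by linarith
      have hB : 1 + x ≤ (1 + x/2 - x^2/8 + x^3)^2 := by
        nlinarith [hpm, hc, h40, h60]
      have := (Real.sqrt_le_sqrt hB).trans_eq (Real.sqrt_sq hB0)
      linarith
    · rcases le_or_gt (1 + x/2 - x^2/8 - x^3) 0 with h | h
      · linarith
      · have hq : (1 + x/2 - x^2/8 - x^3)^2 ≤ 1 + x := by
          nlinarith [hpm, h4, h6]
        have h5 := Real.sqrt_le_sqrt hq
        rw [Real.sqrt_sq h.le] at h5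
        linarith
  · rw [abs_of_neg hs]
    have hc : x^3 ≤ 0 := by nlinarith
    have hpm : x^3 * (1 + x/2 - x^2/8) ≤ x^3 * (23/32) :=
      mul_le_mul_of_nonpos_left hp hc
    have h4 : x^4 ≤ -x^3/2 := by nlinarith [mul_nonpos_of_nonpos_of_nonneg hc (by linarith : (0:ℝ) ≤ x + 1/2)]
    have h6 : x^6 ≤ -x^3/8 := by nlinarith [mul_nonpos_of_nonpos_of_nonneg hc (by nlinarith : (0:ℝ) ≤ x^3 + 1/8)]
    constructor
    · have hB0 : 0 ≤ 1 + x/2 - x^2/8 + (-x)^3 := by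
        have e : (-x)^3 = -x^3 := by ring
        rw [e]; linarith
      have hB : 1 + x ≤ (1 + x/2 - x^2/8 + (-x)^3)^2 := by
        nlinarith [hpm, hc, h40, h60]
      have := (Real.sqrt_le_sqrt hB).trans_eq (Real.sqrt_sq hB0)
      linarith
    · rcases le_or_gt (1 + x/2 - x^2/8 - (-x)^3) 0 with h | h
      · linarith
      · have hq : (1 + x/2 - x^2/8 - (-x)^3)^2 ≤ 1 + x := by
          nlinarith [hpm, h4, h6]
        have h5 := Real.sqrt_le_sqrt hq
        rw [Real.sqrt_sq h.le] at h5
        linarith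

set_option maxHeartbeats 1600000 in
/-- uniform second-order bound for the approximate defect in the single-edge
setup: there is a constant `C(r,s,R⋆)` such that for all `λ ≥ 2√(s³/(r²R⋆))` and all
admissible directions `t`, `|λ²·d̄_λ(t) − X(t)| ≤ C(r,s,R⋆)/λ²`, where
`X(t) = −(Υ²/(2R))·cos(2(Θ−t))/cos³(Θ−t)`. -/
theorem stmt13 (r s Rstar : ℝ) (hr : 0 < r) (hrs : r < s) (hRstar : 0 < Rstar) :
    ∃ C : ℝ, ∀ ϒ Θ R t lam : ℝ,
      r ≤ ϒ → ϒ ≤ s → Rstar ≤ R → |Θ - t| < π / 2 →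
      ϒ / Real.cos (Θ - t) ≤ s →
      2 * Real.sqrt (s ^ 3 / (r ^ 2 * Rstar)) ≤ lam →
      |lam ^ 2 *
          (lam ^ 2 * R * Real.cos (Θ - t) * Real.sqrt (1 + 2 * ϒ / (lam ^ 2 * R))
            - lam ^ 2 * R *
              Real.sqrt (1 - Real.sin (Θ - t) ^ 2 * (1 + 2 * ϒ / (lam ^ 2 * R)))
            - ϒ / Real.cos (Θ - t))
        - (-(ϒ ^ 2 / (2 * R)) * Real.cos (2 * (Θ - t)) / Real.cos (Θ - t) ^ 3)|
        ≤ C / lam ^ 2 := by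
  have hs : 0 < s := hr.trans hrs
  refine ⟨8*s^3/Rstar^2*(1+s^5/r^5), ?_⟩
  intro ϒ Θ R t lam h1 h2 h3 h4 h5 h6
  set θ := Θ - t with hθdef
  obtain ⟨h4a, h4b⟩ := abs_lt.mp h4
  have hc : 0 < Real.cos θ := Real.cos_pos_of_mem_Ioo ⟨h4a, h4b⟩
  have hϒ : 0 < ϒ := hr.trans_le h1
  have hcs : r ≤ Real.cos θ * s := by
    rw [div_le_iff₀ hc] at h5
    linarith
  have hc1 : Real.cos θ ≤ 1 := Real.cos_le_one θ
  have hR : 0 < R := hRstar.trans_le h3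
  have hlam0 : 0 < lam := by
    have : 0 < Real.sqrt (s^3/(r^2*Rstar)) := Real.sqrt_pos.mpr (by positivity)
    linarith
  have hlam2 : 4*(s^3/(r^2*Rstar)) ≤ lam^2 := by
    have h := Real.sq_sqrt (le_of_lt (show (0:ℝ) < s^3/(r^2*Rstar) by positivity))
    have h' := mul_self_le_mul_self
      (by positivity : (0:ℝ) ≤ 2*Real.sqrt (s^3/(r^2*Rstar))) h6
    nlinarith [h, h']
  have hA1 : 4*s^3 ≤ lam^2*(r^2*Rstar) := by
    have h := mul_le_mul_of_nonneg_right hlam2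
      (le_of_lt (show (0:ℝ) < r^2*Rstar by positivity))
    calc 4*s^3 = 4*(s^3/(r^2*Rstar))*(r^2*Rstar) := by field_simp
      _ ≤ lam^2*(r^2*Rstar) := h
  have hlamR : 4*s^3 ≤ r^2*(lam^2*R) := by
    have h2' : lam^2*(r^2*Rstar) ≤ lam^2*(r^2*R) := by
      apply mul_le_mul_of_nonneg_left _ (by positivity : (0:ℝ) ≤ lam^2)
      exact mul_le_mul_of_nonneg_left h3 (by positivity)
    nlinarith [hA1, h2']
  set ε := 2 * ϒ / (lam ^ 2 * R) with hεdef
  have hε0 : 0 < ε := by positivity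
  have hεle : ε ≤ r^2/(2*s^2) := by
    rw [hεdef, div_le_div_iff₀ (by positivity) (by positivity)]
    have h2' := mul_le_mul_of_nonneg_right h2 (by positivity : (0:ℝ) ≤ s^2)
    nlinarith [h2', hlamR]
  have hr2s2 : r^2/(2*s^2) ≤ 1/2 := by
    rw [div_le_iff₀ (by positivity)]
    nlinarith
  have hεhalf : ε ≤ 1/2 := hεle.trans hr2s2
  have hc2 : r^2/s^2 ≤ Real.cos θ^2 := by
    rw [div_le_iff₀ (by positivity : (0:ℝ) < s^2)]
    nlinarith [pow_le_pow_left₀ hr.le hcs 2]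
  set x₂ := -(Real.sin θ^2 * ε / Real.cos θ^2) with hx2def
  have hsin2 : Real.sin θ^2 ≤ 1 := Real.sin_sq_le_one θ
  have hnum : Real.sin θ^2 * ε ≤ ε := by
    nlinarith [mul_le_mul_of_nonneg_right hsin2 hε0.le]
  have hx2abs : |x₂| ≤ ε / Real.cos θ^2 := by
    rw [hx2def, abs_neg, abs_of_nonneg (by positivity)]
    rw [div_le_div_iff₀ (by positivity) (by positivity)]
    nlinarith [mul_le_mul_of_nonneg_right hnum (sq_nonneg (Real.cos θ))]
  have hεc2 : ε / Real.cos θ^2 ≤ 1/2 := by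
    rw [div_le_iff₀ (by positivity : (0:ℝ) < Real.cos θ^2)]
    have h8 : r^2/(2*s^2) ≤ 1/2 * Real.cos θ^2 := by
      rw [div_le_iff₀ (by positivity : (0:ℝ) < 2*s^2)]
      rw [div_le_iff₀ (by positivity : (0:ℝ) < s^2)] at hc2
      nlinarith [hc2]
    nlinarith [hεle, h8]
  have hx2half : |x₂| ≤ 1/2 := hx2abs.trans hεc2
  have hss : Real.sin θ^2 = 1 - Real.cos θ^2 := Real.sin_sq θ
  have hin : 1 - Real.sin θ^2 * (1 + ε) = Real.cos θ^2 * (1 + x₂) := by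
    rw [hx2def, hss]; field_simp; ring
  have hsqrt2 : Real.sqrt (1 - Real.sin θ^2 * (1 + ε))
      = Real.cos θ * Real.sqrt (1 + x₂) := by
    rw [hin, Real.sqrt_mul (sq_nonneg _), Real.sqrt_sq hc.le]
  set E₁ := Real.sqrt (1 + ε) - (1 + ε/2 - ε^2/8) with hE1def
  set E₂ := Real.sqrt (1 + x₂) - (1 + x₂/2 - x₂^2/8) with hE2def
  have hE1 : |E₁| ≤ ε^3 := by
    have h := sqrt_taylor13 (x := ε) (by rw [abs_of_pos hε0]; exact hεhalf)
    rwa [abs_of_pos hε0] at h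
  have hE2 : |E₂| ≤ (ε/Real.cos θ^2)^3 := by
    refine (sqrt_taylor13 hx2half).trans ?_
    exact pow_le_pow_left₀ (abs_nonneg _) hx2abs 3
  have hA : Real.sqrt (1 + ε) = E₁ + (1 + ε/2 - ε^2/8) := by rw [hE1def]; ring
  have hB : Real.sqrt (1 - Real.sin θ^2 * (1 + ε))
      = Real.cos θ * (E₂ + (1 + x₂/2 - x₂^2/8)) := by rw [hsqrt2, hE2def]; ring
  have hcos2 : Real.cos (2*θ) = 2*Real.cos θ^2 - 1 := Real.cos_two_mul θ
  have key : lam ^ 2 *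
          (lam ^ 2 * R * Real.cos θ * Real.sqrt (1 + ε)
            - lam ^ 2 * R * Real.sqrt (1 - Real.sin θ ^ 2 * (1 + ε))
            - ϒ / Real.cos θ)
        - (-(ϒ ^ 2 / (2 * R)) * Real.cos (2 * θ) / Real.cos θ ^ 3)
      = lam^4 * R * Real.cos θ * (E₁ - E₂) := by
    rw [hA, hB, hcos2, hx2def, hεdef, hss]
    field_simp
    ring
  rw [key, abs_mul, abs_of_nonneg (by positivity : (0:ℝ) ≤ lam^4*R*Real.cos θ)]
  have hE : |E₁ - E₂| ≤ ε^3 + (ε/Real.cos θ^2)^3 :=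
    (abs_sub E₁ E₂).trans (add_le_add hE1 hE2)
  have step1 : lam^4*R*Real.cos θ * |E₁ - E₂|
      ≤ lam^4*R*Real.cos θ * (ε^3 + (ε/Real.cos θ^2)^3) :=
    mul_le_mul_of_nonneg_left hE (by positivity)
  refine step1.trans ?_
  rw [le_div_iff₀ (by positivity : (0:ℝ) < lam^2)]
  have e2 : lam^4*R*Real.cos θ * (ε^3 + (ε/Real.cos θ^2)^3) * lam^2
      = (8*ϒ^3/R^2) * (Real.cos θ + 1/Real.cos θ^5) := by
    rw [hεdef]; field_simp; ring
  rw [e2]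
  have hb1 : 8*ϒ^3/R^2 ≤ 8*s^3/Rstar^2 := by
    apply div_le_div₀ (by positivity)
      (by linarith [pow_le_pow_left₀ hϒ.le h2 3]) (by positivity)
      (by linarith [pow_le_pow_left₀ hRstar.le h3 2])
  have hb2 : Real.cos θ + 1/Real.cos θ^5 ≤ 1 + s^5/r^5 := by
    have hp5 : r^5 ≤ Real.cos θ^5 * s^5 := by
      calc r^5 ≤ (Real.cos θ*s)^5 := pow_le_pow_left₀ hr.le hcs 5
        _ = Real.cos θ^5*s^5 := by ring
    have h7 : 1/Real.cos θ^5 ≤ s^5/r^5 := by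
      rw [div_le_div_iff₀ (by positivity) (by positivity)]
      linarith [hp5]
    linarith
  calc (8*ϒ^3/R^2) * (Real.cos θ + 1/Real.cos θ^5)
      ≤ (8*s^3/Rstar^2) * (1 + s^5/r^5) := by
        apply mul_le_mul hb1 hb2 (by positivity) (by positivity)
    _ = 8*s^3/Rstar^2*(1+s^5/r^5) := by ring
end

section
/- Let (L, Θ) have joint density e^{−2ℓ}cos θ on ℝ₊ × (−π/2, π/2) and R ≥ R_⋆ > 0. Then E[(L²·cos(2Θ)/(2R·cosΘ))²] = +∞; that is, the limiting directional defect Z = −(L²/2)cos(2Θ)/(R cosΘ) is not square-integrable. -/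
open MeasureTheory Real

lemma aux_inv_top {t : ℝ} (ht : 0 < t) :
    ∫⁻ y in Set.Ioo (0 : ℝ) t, ENNReal.ofReal y⁻¹ = ⊤ := by
  by_contra h
  have hint : IntegrableOn (fun y : ℝ => y⁻¹) (Set.Ioo (0 : ℝ) t) := by
    refine ⟨measurable_inv.aestronglyMeasurable, ?_⟩
    rw [hasFiniteIntegral_iff_ofReal ?_]
    · exact lt_top_iff_ne_top.mpr h
    · filter_upwards [ae_restrict_mem measurableSet_Ioo] with y hy
      exact (inv_pos.mpr hy.1).le
  have h2 : IntegrableOn (fun y : ℝ => y ^ (-1 : ℝ)) (Set.Ioo (0 : ℝ) t) := by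
    refine hint.congr_fun (fun x hx => ?_) measurableSet_Ioo
    exact (Real.rpow_neg_one x).symm
  have := (intervalIntegral.integrableOn_Ioo_rpow_iff ht).mp h2
  linarith

lemma aux_refl_top {a b : ℝ} (hab : a < b) :
    ∫⁻ θ in Set.Ioo a b, ENNReal.ofReal (b - θ)⁻¹ = ⊤ := by
  have hmp : MeasurePreserving (fun x : ℝ => b - x) volume volume :=
    Measure.measurePreserving_sub_left volume b
  have hemb : MeasurableEmbedding (fun x : ℝ => b - x) :=
    (MeasurableEquiv.subLeft b).measurableEmbedding
  have hpre : (fun x : ℝ => b - x) ⁻¹' Set.Ioo 0 (b - a) = Set.Ioo a b := by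
    ext x
    simp only [Set.mem_preimage, Set.mem_Ioo]
    constructor <;> rintro ⟨h1, h2⟩ <;> constructor <;> linarith
  have := hmp.setLIntegral_comp_preimage_emb hemb
    (fun y => ENNReal.ofReal y⁻¹) (Set.Ioo 0 (b - a))
  rw [hpre] at this
  rw [this, aux_inv_top (by linarith : (0:ℝ) < b - a)]

/-- the limiting directional defect `Z = −(L²/2)cos(2Θ)/(R cosΘ)` with `(L,Θ)`
of density `e^{−2ℓ}cosθ` on `ℝ₊ × (−π/2, π/2)` and `R ≥ R⋆ > 0` is not square-integrable:
`E[Z²] = +∞`. -/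
theorem stmt15 (Rstar R : ℝ) (hRstar : 0 < Rstar) (hR : Rstar ≤ R) :
    (∫⁻ θ in Set.Ioo (-(π / 2)) (π / 2), (∫⁻ ℓ in Set.Ioi (0 : ℝ),
        ENNReal.ofReal ((ℓ ^ 2 * Real.cos (2 * θ) / (2 * R * Real.cos θ)) ^ 2
          * (Real.exp (-2 * ℓ) * Real.cos θ)))) = ⊤ := by
  have hR0 : 0 < R := lt_of_lt_of_le hRstar hR
  set c : ℝ := Real.exp (-4) / (16 * R ^ 2) with hc
  have hc0 : 0 < c := by positivity
  -- pointwise lower bound on the good region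
  have key : ∀ θ ∈ Set.Ioo (π / 3) (π / 2), ∀ ℓ ∈ Set.Ioo (1 : ℝ) 2,
      c * (π / 2 - θ)⁻¹ ≤ (ℓ ^ 2 * Real.cos (2 * θ) / (2 * R * Real.cos θ)) ^ 2
          * (Real.exp (-2 * ℓ) * Real.cos θ) := by
    intro θ hθ ℓ hℓ
    have hθ1 : π / 3 < θ := hθ.1
    have hθ2 : θ < π / 2 := hθ.2
    have hcosθ : 0 < Real.cos θ := Real.cos_pos_of_mem_Ioo ⟨by linarith [pi_pos], hθ2⟩
    -- cos θ ≤ π/2 − θ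
    have hsin : Real.cos θ = Real.sin (π / 2 - θ) := (Real.sin_pi_div_two_sub θ).symm
    have hcosle : Real.cos θ ≤ π / 2 - θ := by
      rw [hsin]; exact Real.sin_le (by linarith)
    -- cos(2θ)² ≥ 1/4
    have hcos2 : Real.cos (2 * θ) ≤ -(1 / 2) := by
      have h1 : Real.cos (2 * θ) ≤ Real.cos (2 * (π / 3)) := by
        apply Real.cos_le_cos_of_nonneg_of_le_pi (by positivity) (by linarith) (by linarith)
      have h2 : Real.cos (2 * (π / 3)) = -(1 / 2) := by
        rw [show 2 * (π / 3) = π - π / 3 by ring, Real.cos_pi_sub, Real.cos_pi_div_three]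
      linarith
    have hcos2sq : 1 / 4 ≤ Real.cos (2 * θ) ^ 2 := by nlinarith
    have hℓ1 : (1 : ℝ) ≤ ℓ := hℓ.1.le
    have hℓ2 : ℓ ≤ 2 := hℓ.2.le
    have hexp : Real.exp (-4) ≤ Real.exp (-2 * ℓ) := Real.exp_le_exp.mpr (by linarith)
    have hℓsq : (1 : ℝ) ≤ ℓ ^ 2 := one_le_pow₀ hℓ1
    have expand : (ℓ ^ 2 * Real.cos (2 * θ) / (2 * R * Real.cos θ)) ^ 2
          * (Real.exp (-2 * ℓ) * Real.cos θ)
        = (ℓ ^ 2) ^ 2 * Real.cos (2 * θ) ^ 2 * Real.exp (-2 * ℓ)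
          / (4 * R ^ 2 * Real.cos θ) := by
      field_simp
      ring
    rw [expand]
    have he4 : 0 < Real.exp (-4) := Real.exp_pos _
    have hinv : (π / 2 - θ)⁻¹ ≤ (Real.cos θ)⁻¹ :=
      inv_anti₀ hcosθ hcosle
    have s1 : 1 / 4 * Real.exp (-4) ≤ Real.cos (2 * θ) ^ 2 * Real.exp (-2 * ℓ) :=
      mul_le_mul hcos2sq hexp he4.le (sq_nonneg _)
    have s2 : Real.cos (2 * θ) ^ 2 * Real.exp (-2 * ℓ)
        ≤ (ℓ ^ 2) ^ 2 * (Real.cos (2 * θ) ^ 2 * Real.exp (-2 * ℓ)) :=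
      le_mul_of_one_le_left (by positivity) (one_le_pow₀ hℓsq)
    have q : Real.exp (-4) * 4 ≤ (ℓ ^ 2) ^ 2 * Real.cos (2 * θ) ^ 2
        * Real.exp (-2 * ℓ) * 16 := by nlinarith [s1, s2]
    calc c * (π / 2 - θ)⁻¹ ≤ c * (Real.cos θ)⁻¹ :=
          mul_le_mul_of_nonneg_left hinv hc0.le
      _ = Real.exp (-4) / (16 * R ^ 2 * Real.cos θ) := by
          rw [hc, ← div_eq_mul_inv, div_div]
      _ ≤ (ℓ ^ 2) ^ 2 * Real.cos (2 * θ) ^ 2 * Real.exp (-2 * ℓ)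
            / (4 * R ^ 2 * Real.cos θ) := by
          rw [div_le_div_iff₀ (by positivity) (by positivity)]
          nlinarith [mul_le_mul_of_nonneg_right q
            (mul_pos (pow_pos hR0 2) hcosθ).le]
  -- lower bound inner integral
  have inner_bd : ∀ θ ∈ Set.Ioo (π / 3) (π / 2),
      ENNReal.ofReal (c * (π / 2 - θ)⁻¹) ≤ ∫⁻ ℓ in Set.Ioi (0 : ℝ),
        ENNReal.ofReal ((ℓ ^ 2 * Real.cos (2 * θ) / (2 * R * Real.cos θ)) ^ 2
          * (Real.exp (-2 * ℓ) * Real.cos θ)) := by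
    intro θ hθ
    have hsub : Set.Ioo (1 : ℝ) 2 ⊆ Set.Ioi 0 := fun x hx => lt_trans one_pos hx.1
    refine le_trans ?_ (lintegral_mono_set hsub)
    have : ENNReal.ofReal (c * (π / 2 - θ)⁻¹)
        = ∫⁻ _ in Set.Ioo (1 : ℝ) 2, ENNReal.ofReal (c * (π / 2 - θ)⁻¹) := by
      rw [setLIntegral_const, Real.volume_Ioo]
      norm_num
    rw [this]
    refine setLIntegral_mono_ae (by fun_prop) ?_
    filter_upwards with ℓ hℓ
    exact ENNReal.ofReal_le_ofReal (key θ hθ ℓ hℓ)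
  -- put it together
  have houter : Set.Ioo (π / 3) (π / 2) ⊆ Set.Ioo (-(π / 2)) (π / 2) :=
    Set.Ioo_subset_Ioo (by linarith [pi_pos]) le_rfl
  rw [eq_top_iff]
  calc (⊤ : ENNReal)
      = ENNReal.ofReal c * ∫⁻ θ in Set.Ioo (π / 3) (π / 2),
          ENNReal.ofReal (π / 2 - θ)⁻¹ := by
        rw [aux_refl_top (by linarith [pi_pos] : π / 3 < π / 2)]
        rw [ENNReal.mul_top (ENNReal.ofReal_pos.mpr hc0).ne']
    _ = ∫⁻ θ in Set.Ioo (π / 3) (π / 2),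
          ENNReal.ofReal c * ENNReal.ofReal (π / 2 - θ)⁻¹ := by
        rw [lintegral_const_mul _ (by fun_prop)]
    _ ≤ ∫⁻ θ in Set.Ioo (π / 3) (π / 2), (∫⁻ ℓ in Set.Ioi (0 : ℝ),
          ENNReal.ofReal ((ℓ ^ 2 * Real.cos (2 * θ) / (2 * R * Real.cos θ)) ^ 2
            * (Real.exp (-2 * ℓ) * Real.cos θ))) := by
        have hmeas : Measurable fun θ : ℝ => ∫⁻ ℓ in Set.Ioi (0 : ℝ),
            ENNReal.ofReal ((ℓ ^ 2 * Real.cos (2 * θ) / (2 * R * Real.cos θ)) ^ 2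
              * (Real.exp (-2 * ℓ) * Real.cos θ)) :=
          Measurable.lintegral_prod_right (by fun_prop)
        refine setLIntegral_mono_ae hmeas.aemeasurable ?_
        · filter_upwards with θ hθ
          rw [← ENNReal.ofReal_mul hc0.le]
          exact inner_bd θ hθ
    _ ≤ _ := lintegral_mono_set houter
end
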